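/- arXiv:2101.01813 — 4 statements merged into one kernel-verified Lean document; each statement's English description precedes it below -/
import Mathlib

section
/- The group G = ℤ * ℤ² is not hyperbolic: for every finite generating set S of G that is closed under inversion and does not contain the identity, and for every δ ≥ 0, the word metric d_S on G fails to be δ-hyperbolic, i.e., there exist x, y, z, w ∈ G with (x,y)_w < min{(x,z)_w, (y,z)_w} − δ. -/
section Defs

variable {G : Type*} [Group G]

/-- Word length with respect to a generating set `S`: the least `n` such that `g`
is a product of `n` elements of `S`. -/
noncomputable def wlen (S : Set G) (g : G) : ℕ :=
  sInf {n | ∃ l : List G, (∀ x ∈ l, x ∈ S) ∧ l.length = n ∧ l.prod = g}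

/-- Word metric: `d(g,h) = |h⁻¹ g|`. -/
noncomputable def wdist (S : Set G) (x y : G) : ℝ := wlen S (y⁻¹ * x)

/-- Gromov product `(x,y)_w = ½ (d(x,w) + d(w,y) − d(x,y))`. -/
noncomputable def gp (S : Set G) (x y w : G) : ℝ :=
  (wdist S x w + wdist S w y - wdist S x y) / 2

/-- The word metric is `δ`-hyperbolic (Gromov's four-point condition). -/
def IsDeltaHyperbolic (S : Set G) (δ : ℝ) : Prop :=
  ∀ x y z w : G, gp S x y w ≥ min (gp S x z w) (gp S y z w) - δ

/-- A group is virtually cyclic if it has a cyclic subgroup of finite index. -/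
def VirtuallyCyclic (G : Type*) [Group G] : Prop :=
  ∃ H : Subgroup G, IsCyclic H ∧ H.FiniteIndex

/-- `GenCon(g)`: the average word length of the conjugates of `g`
by the generators in `S`. -/
noncomputable def genCon (S : Set G) (g : G) : ℝ :=
  (∑ᶠ s ∈ S, (wlen S (s⁻¹ * g * s) : ℝ)) / S.ncard

/-- Conjugation curvature `κ(g) = (|g| − GenCon(g)) / |g|`. -/
noncomputable def kappa (S : Set G) (g : G) : ℝ :=
  ((wlen S g : ℝ) - genCon S g) / (wlen S g)

/-- `k`-spherical conjugation curvature
`κ_k(g) = (|g| − (1/#S_k) Σ_{s ∈ S_k} d(gs,s)) / |g|`; note `d(gs,s) = |s⁻¹ g s|`. -/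
noncomputable def kappaK (S : Set G) (k : ℕ) (g : G) : ℝ :=
  ((wlen S g : ℝ) -
      (∑ᶠ s ∈ {x : G | wlen S x = k}, (wlen S (s⁻¹ * g * s) : ℝ)) /
        ({x : G | wlen S x = k} : Set G).ncard) / (wlen S g)

end Defs

/-- The single relation `aba⁻¹b⁻¹` making the generators `a` (index 1) and `b`
(index 2) commute, in the free group on three generators `t, a, b`. -/
def zz2Rels : Set (FreeGroup (Fin 3)) :=
  {FreeGroup.of 1 * FreeGroup.of 2 * (FreeGroup.of 1)⁻¹ * (FreeGroup.of 2)⁻¹}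

/-- The group `ℤ * ℤ² = ⟨t, a, b ∣ ab = ba⟩`. -/
abbrev ZZ2 := PresentedGroup zz2Rels

namespace ZZ2Gen

/-- The generator `t`. -/
def t : ZZ2 := PresentedGroup.of 0

/-- The generator `a`. -/
def a : ZZ2 := PresentedGroup.of 1

/-- The generator `b`. -/
def b : ZZ2 := PresentedGroup.of 2

end ZZ2Gen

open ZZ2Gen

/-- The generating set `S_neg = {a, a⁻¹, b, b⁻¹, t, t⁻¹}` of `ℤ * ℤ²`. -/
def Sneg : Set ZZ2 := {a, a⁻¹, b, b⁻¹, t, t⁻¹}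

/-!
On the subgroup `ℤ² = ⟨a, b⟩` consider the stable word length `τ(p) = lim |(a^p₁ b^p₂)ⁿ| / n`.
The exponent-sum homomorphisms bound it below by a positive constant on nonzero `p`, and
`τ(2p) ≥ 2 τ(p)`. Hence it cannot satisfy `τ(p + q) + τ(p - q) ≤ 2 max(τ p, τ q)` for all
independent `p, q`: replacing `(p, q)` by the `τ`-smaller vector of each of `{p, q}` and
`{p + q, p - q}` would lower `τ p + τ q` by a fixed amount forever. For a violating pair, the
points `gᴺ, hᴺ, (gh)ᴺ, 1` with `g, h` the images of `p, q` violate the four-point condition by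
an amount linear in `N`, so no `δ` works.
-/

section WordLength

variable {G : Type*} [Group G] {S : Set G}

lemma wlen_list_prod_le {l : List G} (hl : ∀ x ∈ l, x ∈ S) : wlen S l.prod ≤ l.length :=
  Nat.sInf_le ⟨l, hl, rfl, rfl⟩

variable (hgen : Subgroup.closure S = ⊤) (hinv : ∀ s ∈ S, s⁻¹ ∈ S)
include hgen hinv

lemma exists_list_prod_eq (g : G) : ∃ l : List G, (∀ x ∈ l, x ∈ S) ∧ l.prod = g := by
  have hg : g ∈ Subgroup.closure S := hgen ▸ Subgroup.mem_top g
  induction hg using Subgroup.closure_induction with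
  | mem s hs => exact ⟨[s], by simpa using hs, List.prod_singleton⟩
  | one => exact ⟨[], by simp, List.prod_nil⟩
  | mul x y _ _ ihx ihy =>
    obtain ⟨l₁, hl₁, rfl⟩ := ihx
    obtain ⟨l₂, hl₂, rfl⟩ := ihy
    exact ⟨l₁ ++ l₂, by simpa [or_imp, forall_and] using ⟨hl₁, hl₂⟩, List.prod_append⟩
  | inv x _ ihx =>
    obtain ⟨l, hl, rfl⟩ := ihx
    exact ⟨(l.map (·⁻¹)).reverse, by simpa using fun x hx => inv_inv x ▸ hinv _ (hl _ hx),
      (List.prod_inv_reverse l).symm⟩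

lemma exists_list_length_eq_wlen (g : G) :
    ∃ l : List G, (∀ x ∈ l, x ∈ S) ∧ l.length = wlen S g ∧ l.prod = g := by
  obtain ⟨l, hl, hg⟩ := exists_list_prod_eq hgen hinv g
  exact Nat.sInf_mem (s := {n | ∃ l : List G, (∀ x ∈ l, x ∈ S) ∧ l.length = n ∧ l.prod = g})
    ⟨l.length, l, hl, rfl, hg⟩

lemma wlen_mul_le (g h : G) : wlen S (g * h) ≤ wlen S g + wlen S h := by
  obtain ⟨l₁, hl₁, hlen₁, rfl⟩ := exists_list_length_eq_wlen hgen hinv g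
  obtain ⟨l₂, hl₂, hlen₂, rfl⟩ := exists_list_length_eq_wlen hgen hinv h
  rw [← hlen₁, ← hlen₂, ← List.prod_append, ← List.length_append]
  exact wlen_list_prod_le (by simpa [or_imp, forall_and] using ⟨hl₁, hl₂⟩)

lemma wlen_inv_le (g : G) : wlen S g⁻¹ ≤ wlen S g := by
  obtain ⟨l, hl, hlen, rfl⟩ := exists_list_length_eq_wlen hgen hinv g
  rw [← hlen, List.prod_inv_reverse, ← List.length_map (·⁻¹), ← List.length_reverse]
  exact wlen_list_prod_le (by simpa using fun x hx => inv_inv x ▸ hinv _ (hl _ hx))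

lemma wlen_inv (g : G) : wlen S g⁻¹ = wlen S g :=
  (wlen_inv_le hgen hinv g).antisymm (by simpa using wlen_inv_le hgen hinv g⁻¹)

omit hinv hgen in
lemma abs_toAdd_list_prod_le (φ : G →* Multiplicative ℤ) {C : ℝ}
    (hC : ∀ s ∈ S, |((φ s).toAdd : ℝ)| ≤ C) {l : List G} (hl : ∀ x ∈ l, x ∈ S) :
    |((φ l.prod).toAdd : ℝ)| ≤ C * l.length := by
  induction l with
  | nil => simp
  | cons x l ih =>
    simp only [List.forall_mem_cons] at hl
    have hx := hC x hl.1
    calc |((φ (x :: l).prod).toAdd : ℝ)| = |((φ x).toAdd + (φ l.prod).toAdd : ℝ)| := by simp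
      _ ≤ |((φ x).toAdd : ℝ)| + |((φ l.prod).toAdd : ℝ)| := abs_add_le _ _
      _ ≤ C * (x :: l).length := by rw [List.length_cons]; push_cast; linarith [ih hl.2]

lemma abs_toAdd_le_mul_wlen (φ : G →* Multiplicative ℤ) {C : ℝ}
    (hC : ∀ s ∈ S, |((φ s).toAdd : ℝ)| ≤ C) (g : G) : |((φ g).toAdd : ℝ)| ≤ C * wlen S g := by
  obtain ⟨l, hl, hlen, rfl⟩ := exists_list_length_eq_wlen hgen hinv g
  rw [← hlen]
  exact abs_toAdd_list_prod_le φ hC hl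

end WordLength

section StableLength

open Filter

variable {G : Type*} [Group G] {S : Set G}

-- By Fekete's lemma this infimum is also the limit of `|gⁿ| / n`.
noncomputable def stableLength (S : Set G) (g : G) : ℝ :=
  ⨅ n : ℕ+, (wlen S (g ^ (n : ℕ)) : ℝ) / n

lemma stableLength_le_div (g : G) (n : ℕ+) :
    stableLength S g ≤ (wlen S (g ^ (n : ℕ)) : ℝ) / n :=
  ciInf_le ⟨0, by rintro _ ⟨m, rfl⟩; positivity⟩ n

lemma mul_stableLength_le_wlen (g : G) (n : ℕ) :
    n * stableLength S g ≤ wlen S (g ^ n) := by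
  rcases n.eq_zero_or_pos with rfl | hn
  · simp
  have := stableLength_le_div (S := S) g ⟨n, hn⟩
  rwa [le_div_iff₀' (by positivity)] at this

lemma two_mul_stableLength_le (g : G) : 2 * stableLength S g ≤ stableLength S (g ^ 2) := by
  refine le_ciInf fun n => ?_
  have h := stableLength_le_div (S := S) g (2 * n)
  rw [PNat.mul_coe, pow_mul, le_div_iff₀ (by positivity)] at h
  rw [le_div_iff₀ (by positivity)]
  push_cast at h
  linarith

variable (hgen : Subgroup.closure S = ⊤) (hinv : ∀ s ∈ S, s⁻¹ ∈ S)
include hgen hinv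

lemma subadditive_wlen_pow (g : G) : Subadditive fun n => (wlen S (g ^ n) : ℝ) := fun m n => by
  simp only [pow_add]
  exact_mod_cast wlen_mul_le hgen hinv _ _

lemma eventually_wlen_pow_div_lt {g : G} {L : ℝ} (hL : stableLength S g < L) :
    ∀ᶠ n : ℕ in atTop, (wlen S (g ^ n) : ℝ) / n < L := by
  obtain ⟨n, hn⟩ := exists_lt_of_ciInf_lt hL
  exact (subadditive_wlen_pow hgen hinv g).eventually_div_lt_of_div_lt n.ne_zero hn

lemma exists_pos_abs_toAdd_le_mul_stableLength (hfin : S.Finite) (φ : G →* Multiplicative ℤ) :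
    ∃ C : ℝ, 0 < C ∧ ∀ g, |((φ g).toAdd : ℝ)| ≤ C * stableLength S g := by
  obtain ⟨C, hC⟩ := (hfin.image fun s => |((φ s).toAdd : ℝ)|).bddAbove
  refine ⟨max C 1, by positivity, fun g => ?_⟩
  rw [stableLength, Real.mul_iInf_of_nonneg (by positivity)]
  refine le_ciInf fun n => ?_
  have h := abs_toAdd_le_mul_wlen hgen hinv φ (C := max C 1)
    (fun s hs => le_max_of_le_left (hC ⟨s, hs, rfl⟩)) (g ^ (n : ℕ))
  rw [map_pow, toAdd_pow, nsmul_eq_mul, Int.cast_mul, abs_mul, Int.cast_natCast,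
    Nat.abs_cast] at h
  rw [mul_div_assoc', le_div_iff₀' (by positivity)]
  exact h

end StableLength

section FourPoint

open Filter

variable {G : Type*} [Group G] {S : Set G}
variable (hgen : Subgroup.closure S = ⊤) (hinv : ∀ s ∈ S, s⁻¹ ∈ S)
include hgen hinv

lemma gp_lt_min_sub_of_commute {g h : G} (hgh : Commute g h) {δ : ℝ}
    (hlt : 2 * max (wlen S g : ℝ) (wlen S h) + 2 * δ < wlen S (g * h) + wlen S (g * h⁻¹)) :
    gp S g h 1 < min (gp S g (g * h) 1) (gp S h (g * h) 1) - δ := by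
  have hwdist_one : ∀ x : G, wdist S x 1 = wlen S x ∧ wdist S 1 x = wlen S x := fun x => by
    simp [wdist, wlen_inv hgen hinv]
  have hgh' : wdist S g h = wlen S (g * h⁻¹) := by rw [wdist, ← hgh.inv_right.eq]
  have hg_gh : wdist S g (g * h) = wlen S h := by simp [wdist, wlen_inv hgen hinv]
  have hh_gh : wdist S h (g * h) = wlen S g := by
    simp [wdist, hgh.eq, wlen_inv hgen hinv]
  simp only [gp, hwdist_one, hgh', hg_gh, hh_gh, lt_sub_iff_add_lt, lt_min_iff]
  constructor <;> linarith [le_max_left (wlen S g : ℝ) (wlen S h),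
    le_max_right (wlen S g : ℝ) (wlen S h)]

theorem exists_gp_lt_min_sub_of_stableLength {g h : G} (hgh : Commute g h)
    (hτ : 2 * max (stableLength S g) (stableLength S h) <
      stableLength S (g * h) + stableLength S (g * h⁻¹)) (δ : ℝ) :
    ∃ x y z w : G, gp S x y w < min (gp S x z w) (gp S y z w) - δ := by
  set ρ := stableLength S (g * h) + stableLength S (g * h⁻¹) -
    2 * max (stableLength S g) (stableLength S h)
  have hρ : 0 < ρ := by linarith
  have hg := eventually_wlen_pow_div_lt hgen hinv
    (lt_add_of_pos_right (stableLength S g) (by positivity : 0 < ρ / 4))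
  have hh := eventually_wlen_pow_div_lt hgen hinv
    (lt_add_of_pos_right (stableLength S h) (by positivity : 0 < ρ / 4))
  have hN := tendsto_natCast_atTop_atTop.eventually_gt_atTop (4 * δ / ρ)
  obtain ⟨N, hgN, hhN, hδN, hN₀⟩ := (hg.and (hh.and (hN.and (eventually_gt_atTop 0)))).exists
  have hN₀' : (0 : ℝ) < N := by exact_mod_cast hN₀
  rw [div_lt_iff₀ hN₀'] at hgN hhN
  rw [div_lt_iff₀ hρ] at hδN
  refine ⟨g ^ N, h ^ N, g ^ N * h ^ N, 1, gp_lt_min_sub_of_commute hgen hinv (hgh.pow_pow N N) ?_⟩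
  rw [← hgh.mul_pow, ← inv_pow, ← hgh.inv_right.mul_pow]
  have hmax_g := mul_le_mul_of_nonneg_left (le_max_left (stableLength S g) (stableLength S h))
    hN₀'.le
  have hmax_h := mul_le_mul_of_nonneg_left (le_max_right (stableLength S g) (stableLength S h))
    hN₀'.le
  have hρN : N * ρ = N * stableLength S (g * h) + N * stableLength S (g * h⁻¹) -
      2 * (N * max (stableLength S g) (stableLength S h)) := by ring
  have hgh_N := mul_stableLength_le_wlen (S := S) (g * h) N
  have hgh'_N := mul_stableLength_le_wlen (S := S) (g * h⁻¹) N
  rcases max_choice (wlen S (g ^ N) : ℝ) (wlen S (h ^ N)) with hmax | hmax <;> rw [hmax] <;>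
    linarith

end FourPoint

section Descent

def det2 (p q : ℤ × ℤ) : ℤ := p.1 * q.2 - p.2 * q.1

variable {f : ℤ × ℤ → ℝ} {c : ℝ} (hf : ∀ p ≠ 0, c ≤ f p) (hf2 : ∀ p, 2 * f p ≤ f (p + p))
include hf hf2

lemma exists_det2_ne_zero_add_le_sub
    (H : ∀ p q, det2 p q ≠ 0 → f (p + q) + f (p - q) ≤ 2 * max (f p) (f q))
    {x y : ℤ × ℤ} (hxy : det2 x y ≠ 0) :
    ∃ u v, det2 u v ≠ 0 ∧ f u + f v ≤ f x + f y - c := by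
  have hx : x ≠ 0 := by rintro rfl; simp [det2] at hxy
  have hy : y ≠ 0 := by rintro rfl; simp [det2] at hxy
  have h₁ := H x y hxy
  have h₂ := H (x + y) (x - y) (by
    have : det2 (x + y) (x - y) = -2 * det2 x y := by
      simp only [det2, Prod.fst_add, Prod.snd_add, Prod.fst_sub, Prod.snd_sub]; ring
    rw [this]
    exact mul_ne_zero (by norm_num) hxy)
  rw [add_add_sub_cancel, add_sub_sub_cancel] at h₂
  -- Doubling and `h₂` give `f x + f y ≤ max (f (x + y)) (f (x - y))`; with `h₁`, the smaller
  -- of `f (x ± y)` is at most `max (f x) (f y) - min (f x) (f y)`.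
  have key : min (f x) (f y) + min (f (x + y)) (f (x - y)) ≤ f x + f y - c := by
    linarith [max_add_min (f x) (f y), max_add_min (f (x + y)) (f (x - y)), hf2 x, hf2 y,
      le_min (hf x hx) (hf y hy)]
  obtain ⟨u, hu, hfu⟩ : ∃ u, (u = x ∨ u = y) ∧ f u = min (f x) (f y) := by
    rcases min_choice (f x) (f y) with h | h
    exacts [⟨x, .inl rfl, h.symm⟩, ⟨y, .inr rfl, h.symm⟩]
  obtain ⟨v, hv, hfv⟩ :
      ∃ v, (v = x + y ∨ v = x - y) ∧ f v = min (f (x + y)) (f (x - y)) := by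
    rcases min_choice (f (x + y)) (f (x - y)) with h | h
    exacts [⟨x + y, .inl rfl, h.symm⟩, ⟨x - y, .inr rfl, h.symm⟩]
  refine ⟨u, v, fun h => hxy ?_, hfu ▸ hfv ▸ key⟩
  rcases hu with rfl | rfl <;> rcases hv with rfl | rfl <;>
    simp only [det2, Prod.fst_add, Prod.snd_add, Prod.fst_sub, Prod.snd_sub] at h ⊢ <;>
    first | linear_combination h | linear_combination -h

theorem exists_det2_ne_zero_two_mul_max_lt (hc : 0 < c) :
    ∃ p q, det2 p q ≠ 0 ∧ 2 * max (f p) (f q) < f (p + q) + f (p - q) := by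
  by_contra! H
  have descent : ∀ k : ℕ, ∃ u v, det2 u v ≠ 0 ∧ f u + f v ≤ f (1, 0) + f (0, 1) - k * c := by
    intro k
    induction k with
    | zero => exact ⟨(1, 0), (0, 1), by simp [det2], by simp⟩
    | succ k ih =>
      obtain ⟨u, v, huv, hk⟩ := ih
      obtain ⟨u', v', huv', hk'⟩ := exists_det2_ne_zero_add_le_sub hf hf2 H huv
      exact ⟨u', v', huv', by push_cast; linarith⟩
  obtain ⟨k, hk⟩ := exists_nat_gt ((f (1, 0) + f (0, 1)) / c)
  obtain ⟨u, v, huv, hle⟩ := descent k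
  have hu : u ≠ 0 := by rintro rfl; simp [det2] at huv
  have hv : v ≠ 0 := by rintro rfl; simp [det2] at huv
  rw [div_lt_iff₀ hc] at hk
  linarith [hf u hu, hf v hv]

end Descent

namespace ZZ2

lemma commute_a_b : Commute a b :=
  commutatorElement_eq_one_iff_commute.mp (PresentedGroup.one_of_mem rfl)

noncomputable def ofPair (p : ℤ × ℤ) : ZZ2 := a ^ p.1 * b ^ p.2

lemma ofPair_add (p q : ℤ × ℤ) : ofPair (p + q) = ofPair p * ofPair q := by
  simp only [ofPair, Prod.fst_add, Prod.snd_add, zpow_add]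
  exact ((commute_a_b.zpow_zpow q.1 p.2).symm.mul_mul_mul_comm _ _).symm

lemma ofPair_sub (p q : ℤ × ℤ) : ofPair (p - q) = ofPair p * (ofPair q)⁻¹ :=
  eq_mul_inv_of_mul_eq (by rw [← ofPair_add, sub_add_cancel])

lemma commute_ofPair (p q : ℤ × ℤ) : Commute (ofPair p) (ofPair q) := by
  rw [Commute, SemiconjBy, ← ofPair_add, ← ofPair_add, add_comm]

def expSum (i : Fin 3) : ZZ2 →* Multiplicative ℤ :=
  PresentedGroup.toGroup (f := fun j => Multiplicative.ofAdd (if j = i then 1 else 0)) <| by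
    rintro _ rfl
    simp only [map_mul, map_inv]
    exact (Commute.all _ _).commutator_eq

lemma expSum_one_ofPair (p : ℤ × ℤ) : (expSum 1 (ofPair p)).toAdd = p.1 := by
  simp [expSum, ofPair, a, b, PresentedGroup.toGroup.of]

lemma expSum_two_ofPair (p : ℤ × ℤ) : (expSum 2 (ofPair p)).toAdd = p.2 := by
  simp [expSum, ofPair, a, b, PresentedGroup.toGroup.of]

lemma exists_pos_le_stableLength_ofPair {S : Set ZZ2} (hfin : S.Finite)
    (hgen : Subgroup.closure S = ⊤) (hinv : ∀ s ∈ S, s⁻¹ ∈ S) :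
    ∃ c > 0, ∀ p ≠ 0, c ≤ stableLength S (ofPair p) := by
  obtain ⟨C₁, hC₁, h₁⟩ := exists_pos_abs_toAdd_le_mul_stableLength hgen hinv hfin (expSum 1)
  obtain ⟨C₂, hC₂, h₂⟩ := exists_pos_abs_toAdd_le_mul_stableLength hgen hinv hfin (expSum 2)
  refine ⟨min C₁⁻¹ C₂⁻¹, by positivity, fun p hp => ?_⟩
  have hp₁ := h₁ (ofPair p)
  have hp₂ := h₂ (ofPair p)
  rw [expSum_one_ofPair] at hp₁
  rw [expSum_two_ofPair] at hp₂
  rcases ne_or_eq p.1 0 with hne | heq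
  · have : (1 : ℝ) ≤ |(p.1 : ℝ)| := by exact_mod_cast Int.one_le_abs hne
    exact (min_le_left _ _).trans ((inv_le_iff_one_le_mul₀' hC₁).2 (by linarith))
  · have hne : p.2 ≠ 0 := fun h => hp (Prod.ext heq h)
    have : (1 : ℝ) ≤ |(p.2 : ℝ)| := by exact_mod_cast Int.one_le_abs hne
    exact (min_le_right _ _).trans ((inv_le_iff_one_le_mul₀' hC₂).2 (by linarith))

end ZZ2

theorem zz2_not_hyperbolic_general (S : Set ZZ2)
    (hfin : S.Finite) (hgen : Subgroup.closure S = ⊤)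
    (hinv : ∀ s ∈ S, s⁻¹ ∈ S)
    (δ : ℝ) :
    ∃ x y z w : ZZ2, gp S x y w < min (gp S x z w) (gp S y z w) - δ := by
  obtain ⟨c, hc, hfc⟩ := ZZ2.exists_pos_le_stableLength_ofPair hfin hgen hinv
  obtain ⟨p, q, -, hpq⟩ := exists_det2_ne_zero_two_mul_max_lt hfc
    (fun p => by simpa only [ZZ2.ofPair_add, ← sq] using two_mul_stableLength_le (ZZ2.ofPair p))
    hc
  refine exists_gp_lt_min_sub_of_stableLength hgen hinv (ZZ2.commute_ofPair p q) ?_ δ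
  rwa [← ZZ2.ofPair_add, ← ZZ2.ofPair_sub]

/-- `ℤ * ℤ²` is not hyperbolic: for every finite generating set `S` (closed under
inversion, not containing the identity) and every `δ ≥ 0`, the word metric fails
Gromov's four-point condition for `δ`. -/
theorem zz2_not_hyperbolic (S : Set ZZ2)
    (hfin : S.Finite) (hgen : Subgroup.closure S = ⊤)
    (hinv : ∀ s ∈ S, s⁻¹ ∈ S) (hone : (1 : ZZ2) ∉ S)
    (δ : ℝ) (hδ : 0 ≤ δ) :
    ∃ x y z w : ZZ2, gp S x y w < min (gp S x z w) (gp S y z w) - δ :=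
  zz2_not_hyperbolic_general S hfin hgen hinv δ
end

section
/- In the free group F₂ on generators a, b, with respect to the generating set S_α = {a, a⁻¹, b, b⁻¹}, every non-identity element g satisfies κ(g) = −1/|g|. -/
/-- The free group of rank 2. -/
abbrev F2 := FreeGroup Bool

namespace F2Gen

/-- The generator `a`. -/
def a : F2 := FreeGroup.of true

/-- The generator `b`. -/
def b : F2 := FreeGroup.of false

end F2Gen

open F2Gen

/-- The standard generating set `S_α = {a, a⁻¹, b, b⁻¹}` of `F₂`. -/
def Sα : Set F2 := {a, a⁻¹, b, b⁻¹}

namespace FreeGroup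

variable {α : Type*}

variable (α) in
def letters : Set (FreeGroup α) := Set.range fun x : α × Bool => mk [x]

theorem prod_map_mk_singleton (L : List (α × Bool)) : (L.map fun x => mk [x]).prod = mk L := by
  induction L with
  | nil => rfl
  | cons x L ih => rw [List.map_cons, List.prod_cons, ih, mul_mk]; rfl

variable [DecidableEq α]

theorem mk_singleton_injective : Function.Injective fun x : α × Bool => mk [x] := by
  intro x y h
  simpa using congrArg toWord h

theorem norm_prod_le_length {l : List (FreeGroup α)} (hl : ∀ s ∈ l, s ∈ letters α) :
    norm l.prod ≤ l.length := by
  induction l with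
  | nil => simp
  | cons s l ih =>
    obtain ⟨x, rfl⟩ := hl s List.mem_cons_self
    rw [List.prod_cons, List.length_cons, add_comm]
    exact (norm_mul_le _ _).trans
      (add_le_add norm_mk_le (ih fun t ht => hl t (List.mem_cons_of_mem _ ht)))

theorem wlen_letters (g : FreeGroup α) : wlen (letters α) g = norm g := by
  have hword : (g.toWord.map fun x => mk [x]).prod = g := by
    rw [prod_map_mk_singleton, mk_toWord]
  have hletters : ∀ s ∈ g.toWord.map fun x => mk [x], s ∈ letters α :=
    List.forall_mem_map.mpr fun x _ => Set.mem_range_self x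
  apply le_antisymm
  · exact Nat.sInf_le ⟨_, hletters, List.length_map _, hword⟩
  · refine le_csInf ⟨_, _, hletters, rfl, hword⟩ ?_
    rintro _ ⟨l, hl, rfl, rfl⟩
    exact norm_prod_le_length hl

theorem toWord_mk_singleton_mul (x : α × Bool) (g : FreeGroup α) :
    (mk [x] * g).toWord =
      if g.toWord.head? = some (x.1, !x.2) then g.toWord.tail else x :: g.toWord := by
  rw [toWord_mul, toWord_mk, reduce_singleton, List.singleton_append, reduce.cons,
    reduce_toWord]
  rcases g.toWord with _ | ⟨y, w⟩
  · rfl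
  · simp only [List.head?_cons, Option.some.injEq, Prod.ext_iff, List.tail_cons]
    congr 1
    grind

theorem toWord_mul_mk_singleton (g : FreeGroup α) (x : α × Bool) :
    (g * mk [x]).toWord =
      if g.toWord.getLast? = some (x.1, !x.2) then g.toWord.dropLast else g.toWord ++ [x] := by
  have hinv : g * mk [x] = (mk [(x.1, !x.2)] * g⁻¹)⁻¹ := by
    simp [inv_mk, invRev]
  have hhead : (invRev g.toWord).head? = some x ↔ g.toWord.getLast? = some (x.1, !x.2) := by
    simp [invRev, List.head?_reverse, List.getLast?_map, Prod.ext_iff]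
  rw [hinv, toWord_inv, toWord_mk_singleton_mul, toWord_inv]
  simp only [Bool.not_not]
  simp only [hhead, apply_ite invRev]
  simp [invRev, List.tail_reverse, List.map_dropLast, Function.comp_def]

/-- `g⁻¹.toWord.head? = some x` says that the reduced word of `g` ends in `x⁻¹`. -/
theorem norm_conj_mk_singleton_add {g : FreeGroup α} (hg : g ≠ 1) (x : α × Bool) :
    norm ((mk [x])⁻¹ * g * mk [x]) + (if g.toWord.head? = some x then 2 else 0)
      + (if g⁻¹.toWord.head? = some x then 2 else 0) = norm g + 2 := by
  have hinv : (mk [x])⁻¹ = mk [(x.1, !x.2)] := by simp [inv_mk, invRev]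
  rw [hinv, mul_assoc, norm, toWord_mk_singleton_mul, toWord_mul_mk_singleton, toWord_inv, norm]
  obtain ⟨y, u, hw⟩ := List.exists_cons_of_ne_nil (toWord_eq_nil_iff.not.mpr hg)
  rw [hw]
  rcases List.eq_nil_or_concat' u with rfl | ⟨v, z, rfl⟩
  · simp only [invRev]
    split_ifs <;> simp_all [Prod.ext_iff]
  · rw [← List.cons_append]
    simp only [invRev, List.getLast?_concat, List.dropLast_concat]
    split_ifs <;> simp_all [Prod.ext_iff]

theorem sum_norm_conj_mk_singleton_add [Fintype α] {g : FreeGroup α} (hg : g ≠ 1) :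
    ∑ x : α × Bool, norm ((mk [x])⁻¹ * g * mk [x]) + 4 =
      Fintype.card (α × Bool) * (norm g + 2) := by
  have head_isSome {h : FreeGroup α} (hh : h ≠ 1) : ∃ y, h.toWord.head? = some y :=
    Option.isSome_iff_exists.mp (List.isSome_head?.mpr (toWord_eq_nil_iff.not.mpr hh))
  obtain ⟨y, hy⟩ := head_isSome hg
  obtain ⟨z, hz⟩ := head_isSome (inv_ne_one.mpr hg)
  have hsum := Finset.sum_congr rfl fun x (_ : x ∈ Finset.univ) => norm_conj_mk_singleton_add hg x
  simp only [Finset.sum_add_distrib, hy, hz, Option.some_inj, Finset.sum_ite_eq,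
    Finset.mem_univ, if_true, Finset.sum_const, Finset.card_univ, smul_eq_mul] at hsum
  rw [mul_add]
  omega

theorem genCon_letters [Fintype α] {g : FreeGroup α} (hg : g ≠ 1) :
    genCon (letters α) g = norm g + 2 - 2 / Fintype.card α := by
  have hsum := sum_norm_conj_mk_singleton_add hg
  have hcard : 0 < Fintype.card α := by
    by_contra! h
    simp_all [Fintype.card_prod]
  simp only [genCon, wlen_letters]
  rw [letters, finsum_mem_range mk_singleton_injective,
    Set.ncard_range_of_injective mk_singleton_injective, finsum_eq_sum_of_fintype,
    Nat.card_eq_fintype_card]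
  rw [Fintype.card_prod, Fintype.card_bool] at hsum ⊢
  have hsumR : ∑ x : α × Bool, (norm ((mk [x])⁻¹ * g * mk [x]) : ℝ) =
      Fintype.card α * 2 * (norm g + 2) - 4 := by
    rw [eq_sub_iff_add_eq]
    exact_mod_cast hsum
  rw [hsumR]
  push_cast
  field_simp
  ring

theorem kappa_letters [Fintype α] {g : FreeGroup α} (hg : g ≠ 1) :
    kappa (letters α) g = (2 / Fintype.card α - 2) / norm g := by
  rw [kappa, genCon_letters hg, wlen_letters]
  ring

end FreeGroup

theorem Sα_eq_letters : Sα = FreeGroup.letters Bool := by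
  ext s
  simp [Sα, FreeGroup.letters, a, b, FreeGroup.of, FreeGroup.inv_mk, FreeGroup.invRev, eq_comm,
    or_comm, or_assoc]

/-- With respect to `S_α`, every non-identity element of `F₂` has curvature `−1/|g|`. -/
theorem f2_standard_curvature (g : F2) (hg : g ≠ 1) :
    kappa Sα g = -1 / (wlen Sα g : ℝ) := by
  rw [Sα_eq_letters, FreeGroup.kappa_letters hg, FreeGroup.wlen_letters, Fintype.card_bool]
  norm_num
end

section
/- In the free group F₂ with generating set S_γ, for every g ∈ F₂ with g ≠ 1 and every s ∈ S_γ: either |sg| = |g| − 1 or |sg| = |g| + 1, and |sg| = |g| − 1 holds if and only if there exists a geodesic spelling of g beginning with s⁻¹. Similarly, either |gs| = |g| − 1 or |gs| = |g| + 1, and |gs| = |g| − 1 holds if and only if there exists a geodesic spelling of g ending with s⁻¹. -/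
open F2Gen

/-- The word `w = ababa`. -/
def wγ : F2 := a * b * a * b * a

/-- The generating set `S_γ = {a, a⁻¹, b, b⁻¹, w, w⁻¹}` of `F₂`. -/
def Sγ : Set F2 := {a, a⁻¹, b, b⁻¹, wγ, wγ⁻¹}


/-!
Every element of `S_γ` has odd length as a reduced word (`w = ababa` has length 5), so the
sign character `F₂ → {±1}` sending `a, b ↦ -1` takes the value `(-1) ^ |g|` at `g`.
Hence `|sg|` and `|g|` have different parities, while `|sg| ≤ |g| + 1` and
`|g| = |s⁻¹(sg)| ≤ |sg| + 1`; so `|sg| = |g| ± 1`. A geodesic spelling of `sg` prefixed by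
`s⁻¹` is a spelling of `g` of length `|sg| + 1`, which gives the characterisation of the
case `|sg| = |g| - 1`. Right multiplication is symmetric.
-/

namespace WordLength

variable {G : Type*} [Group G] {S : Set G}

structure IsSymmetricGenerating (S : Set G) : Prop where
  inv_mem : ∀ s ∈ S, s⁻¹ ∈ S
  closure_eq_top : Subgroup.closure S = ⊤

theorem wlen_prod_le_length {l : List G} (hl : ∀ x ∈ l, x ∈ S) : wlen S l.prod ≤ l.length :=
  Nat.sInf_le ⟨l, hl, rfl, rfl⟩

theorem exists_geodesic (hS : IsSymmetricGenerating S) (g : G) :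
    ∃ l : List G, (∀ x ∈ l, x ∈ S) ∧ l.length = wlen S g ∧ l.prod = g := by
  have hg : g ∈ Submonoid.closure (S ∪ S⁻¹) := by
    rw [← Subgroup.closure_toSubmonoid, hS.closure_eq_top]
    trivial
  obtain ⟨l, hl, hprod⟩ := Submonoid.exists_list_of_mem_closure hg
  have hlS : ∀ x ∈ l, x ∈ S := fun x hx =>
    (hl x hx).elim id fun hx' => inv_inv x ▸ hS.inv_mem _ hx'
  exact Nat.sInf_mem
    (s := {n | ∃ l : List G, (∀ x ∈ l, x ∈ S) ∧ l.length = n ∧ l.prod = g})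
    ⟨l.length, l, hlS, rfl, hprod⟩

theorem wlen_mul_left_le (hS : IsSymmetricGenerating S) {s : G} (hs : s ∈ S) (g : G) :
    wlen S (s * g) ≤ wlen S g + 1 := by
  obtain ⟨l, hl, hlen, rfl⟩ := exists_geodesic hS g
  have := wlen_prod_le_length (S := S) (l := s :: l) (by simpa [hs] using hl)
  simpa [hlen] using this

theorem wlen_mul_right_le (hS : IsSymmetricGenerating S) {s : G} (hs : s ∈ S) (g : G) :
    wlen S (g * s) ≤ wlen S g + 1 := by
  obtain ⟨l, hl, hlen, rfl⟩ := exists_geodesic hS g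
  have := wlen_prod_le_length (S := S) (l := l ++ [s])
    (by simpa [or_imp, forall_and, hs] using hl)
  simpa [hlen] using this

theorem wlen_le_wlen_mul_left (hS : IsSymmetricGenerating S) {s : G} (hs : s ∈ S) (g : G) :
    wlen S g ≤ wlen S (s * g) + 1 := by
  simpa using wlen_mul_left_le hS (hS.inv_mem s hs) (s * g)

theorem wlen_le_wlen_mul_right (hS : IsSymmetricGenerating S) {s : G} (hs : s ∈ S) (g : G) :
    wlen S g ≤ wlen S (g * s) + 1 := by
  simpa using wlen_mul_right_le hS (hS.inv_mem s hs) (g * s)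

theorem map_eq_neg_one_pow_wlen (hS : IsSymmetricGenerating S) {χ : G →* ℤˣ}
    (hχ : ∀ s ∈ S, χ s = -1) (g : G) : χ g = (-1) ^ wlen S g := by
  obtain ⟨l, hl, hlen, rfl⟩ := exists_geodesic hS g
  rw [← hlen, map_list_prod, List.prod_eq_pow_card (l.map χ) (-1)
    (by simpa using fun x hx => hχ x (hl x hx)), List.length_map]

theorem wlen_mul_left_ne (hS : IsSymmetricGenerating S) {χ : G →* ℤˣ}
    (hχ : ∀ s ∈ S, χ s = -1) {s : G} (hs : s ∈ S) (g : G) :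
    wlen S (s * g) ≠ wlen S g := by
  intro h
  have := map_eq_neg_one_pow_wlen hS hχ (s * g)
  rw [map_mul, hχ s hs, h, ← map_eq_neg_one_pow_wlen hS hχ g, neg_one_mul] at this
  exact neg_units_ne_self _ this

theorem wlen_mul_right_ne (hS : IsSymmetricGenerating S) {χ : G →* ℤˣ}
    (hχ : ∀ s ∈ S, χ s = -1) {s : G} (hs : s ∈ S) (g : G) :
    wlen S (g * s) ≠ wlen S g := by
  intro h
  have := map_eq_neg_one_pow_wlen hS hχ (g * s)
  rw [map_mul, hχ s hs, h, ← map_eq_neg_one_pow_wlen hS hχ g, mul_neg_one] at this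
  exact neg_units_ne_self _ this

theorem wlen_mul_left_add_one_eq_or (hS : IsSymmetricGenerating S) {χ : G →* ℤˣ}
    (hχ : ∀ s ∈ S, χ s = -1) {s : G} (hs : s ∈ S) (g : G) :
    wlen S (s * g) + 1 = wlen S g ∨ wlen S (s * g) = wlen S g + 1 := by
  have := wlen_mul_left_le hS hs g
  have := wlen_le_wlen_mul_left hS hs g
  have := wlen_mul_left_ne hS hχ hs g
  omega

theorem wlen_mul_right_add_one_eq_or (hS : IsSymmetricGenerating S) {χ : G →* ℤˣ}
    (hχ : ∀ s ∈ S, χ s = -1) {s : G} (hs : s ∈ S) (g : G) :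
    wlen S (g * s) + 1 = wlen S g ∨ wlen S (g * s) = wlen S g + 1 := by
  have := wlen_mul_right_le hS hs g
  have := wlen_le_wlen_mul_right hS hs g
  have := wlen_mul_right_ne hS hχ hs g
  omega

theorem wlen_mul_left_add_one_eq_iff (hS : IsSymmetricGenerating S) {s : G} (hs : s ∈ S)
    (g : G) :
    wlen S (s * g) + 1 = wlen S g ↔
      ∃ l : List G, (∀ x ∈ l, x ∈ S) ∧ l.prod = g ∧ l.length = wlen S g ∧
        l.head? = some s⁻¹ := by
  constructor
  · intro h
    obtain ⟨l, hl, hlen, hprod⟩ := exists_geodesic hS (s * g)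
    exact ⟨s⁻¹ :: l, by simpa [hS.inv_mem s hs] using hl, by simp [hprod], by simp [hlen, h],
      rfl⟩
  · rintro ⟨l, hl, rfl, hlen, hhead⟩
    obtain ⟨t, rfl⟩ := List.head?_eq_some_iff.1 hhead
    have hshorter : wlen S (s * (s⁻¹ :: t).prod) ≤ t.length := by
      simpa using wlen_prod_le_length (S := S) (fun x hx => hl x (List.mem_cons_of_mem _ hx))
    have := wlen_le_wlen_mul_left hS hs (s⁻¹ :: t).prod
    simp only [List.length_cons] at hlen
    omega

theorem wlen_mul_right_add_one_eq_iff (hS : IsSymmetricGenerating S) {s : G} (hs : s ∈ S)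
    (g : G) :
    wlen S (g * s) + 1 = wlen S g ↔
      ∃ l : List G, (∀ x ∈ l, x ∈ S) ∧ l.prod = g ∧ l.length = wlen S g ∧
        l.getLast? = some s⁻¹ := by
  constructor
  · intro h
    obtain ⟨l, hl, hlen, hprod⟩ := exists_geodesic hS (g * s)
    exact ⟨l ++ [s⁻¹], by simpa [or_imp, forall_and, hS.inv_mem s hs] using hl,
      by simp [hprod], by simp [hlen, h], by simp⟩
  · rintro ⟨l, hl, rfl, hlen, hlast⟩
    obtain ⟨t, rfl⟩ := List.getLast?_eq_some_iff.1 hlast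
    have hshorter : wlen S ((t ++ [s⁻¹]).prod * s) ≤ t.length := by
      simpa using wlen_prod_le_length (S := S) (fun x hx => hl x (List.mem_append_left _ hx))
    have := wlen_le_wlen_mul_right hS hs (t ++ [s⁻¹]).prod
    simp only [List.length_append, List.length_singleton] at hlen
    omega

end WordLength

open WordLength

theorem inv_mem_Sγ : ∀ s ∈ Sγ, s⁻¹ ∈ Sγ := by
  rintro s (rfl | rfl | rfl | rfl | rfl | rfl) <;> simp [Sγ]

theorem closure_Sγ_eq_top : Subgroup.closure Sγ = ⊤ := by
  refine eq_top_mono (Subgroup.closure_mono ?_) (FreeGroup.closure_range_of Bool)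
  rintro _ ⟨_ | _, rfl⟩ <;> simp [Sγ, a, b]

theorem isSymmetricGenerating_Sγ : IsSymmetricGenerating Sγ :=
  ⟨inv_mem_Sγ, closure_Sγ_eq_top⟩

def lengthSign : F2 →* ℤˣ := FreeGroup.lift fun _ => -1

theorem lengthSign_eq_neg_one_of_mem_Sγ : ∀ s ∈ Sγ, lengthSign s = -1 := by
  rintro s (rfl | rfl | rfl | rfl | rfl | rfl) <;>
    simp [lengthSign, a, b, wγ]

theorem extending_corollary_general (g : F2) (s : F2) (hs : s ∈ Sγ) :
    (wlen Sγ (s * g) + 1 = wlen Sγ g ∨ wlen Sγ (s * g) = wlen Sγ g + 1) ∧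
    (wlen Sγ (s * g) + 1 = wlen Sγ g ↔
      ∃ l : List F2, (∀ x ∈ l, x ∈ Sγ) ∧ l.prod = g ∧ l.length = wlen Sγ g ∧
        l.head? = some s⁻¹) ∧
    (wlen Sγ (g * s) + 1 = wlen Sγ g ∨ wlen Sγ (g * s) = wlen Sγ g + 1) ∧
    (wlen Sγ (g * s) + 1 = wlen Sγ g ↔
      ∃ l : List F2, (∀ x ∈ l, x ∈ Sγ) ∧ l.prod = g ∧ l.length = wlen Sγ g ∧
        l.getLast? = some s⁻¹) :=
  ⟨wlen_mul_left_add_one_eq_or isSymmetricGenerating_Sγ lengthSign_eq_neg_one_of_mem_Sγ hs g,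
    wlen_mul_left_add_one_eq_iff isSymmetricGenerating_Sγ hs g,
    wlen_mul_right_add_one_eq_or isSymmetricGenerating_Sγ lengthSign_eq_neg_one_of_mem_Sγ hs g,
    wlen_mul_right_add_one_eq_iff isSymmetricGenerating_Sγ hs g⟩

/-- With respect to `S_γ`: for all `g ≠ 1` and `s ∈ S_γ`, either `|sg| = |g| − 1` or
`|sg| = |g| + 1`, with `|sg| = |g| − 1` iff `g` has a geodesic spelling beginning
with `s⁻¹`; similarly `|gs| = |g| − 1` or `|gs| = |g| + 1`, with `|gs| = |g| − 1`
iff `g` has a geodesic spelling ending with `s⁻¹`. -/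
theorem extending_corollary (g : F2) (hg : g ≠ 1) (s : F2) (hs : s ∈ Sγ) :
    (wlen Sγ (s * g) + 1 = wlen Sγ g ∨ wlen Sγ (s * g) = wlen Sγ g + 1) ∧
    (wlen Sγ (s * g) + 1 = wlen Sγ g ↔
      ∃ l : List F2, (∀ x ∈ l, x ∈ Sγ) ∧ l.prod = g ∧ l.length = wlen Sγ g ∧
        l.head? = some s⁻¹) ∧
    (wlen Sγ (g * s) + 1 = wlen Sγ g ∨ wlen Sγ (g * s) = wlen Sγ g + 1) ∧
    (wlen Sγ (g * s) + 1 = wlen Sγ g ↔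
      ∃ l : List F2, (∀ x ∈ l, x ∈ Sγ) ∧ l.prod = g ∧ l.length = wlen Sγ g ∧
        l.getLast? = some s⁻¹) :=
  extending_corollary_general g s hs
end

section
/- Let G be a group with finite generating set S closed under inversion and not containing the identity, whose word metric d is δ-hyperbolic for some δ ≥ 0, and suppose C₂ > 1 is a constant such that #B_k ≥ C₂ · #B_{k−1} for all integers k ≥ 1. Then there exists a constant C₃ > 0 such that for all g ∈ G, all integers k ≥ 1, and all integers L with 2⌈δ⌉ ≤ L ≤ k, the set A_k(g,L) = {s ∈ B_k : (g,s)₁ ≥ L} satisfies #A_k(g,L) ≤ C₃ · C₂^{−L} · #B_k. -/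
section BallBoundProof

open Pointwise

variable {G : Type*} [Group G] {S : Set G}

private lemma wlen_le_of_list (l : List G) (hl : ∀ x ∈ l, x ∈ S) :
    wlen S l.prod ≤ l.length :=
  Nat.sInf_le ⟨l, hl, rfl, rfl⟩

private lemma wlen_spec (hgen : Subgroup.closure S = ⊤) (hinv : ∀ s ∈ S, s⁻¹ ∈ S) (g : G) :
    ∃ l : List G, (∀ x ∈ l, x ∈ S) ∧ l.length = wlen S g ∧ l.prod = g := by
  have hg : g ∈ Subgroup.closure S := hgen ▸ Subgroup.mem_top g
  have hg' : g ∈ Submonoid.closure (S ∪ S⁻¹) := by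
    rw [← Subgroup.closure_toSubmonoid]; exact hg
  obtain ⟨l, hl, hprod⟩ := Submonoid.exists_list_of_mem_closure hg'
  have hlS : ∀ x ∈ l, x ∈ S := by
    intro x hx
    rcases hl x hx with h | h
    · exact h
    · have := hinv _ (Set.mem_inv.mp h); simpa using this
  have hne : {n | ∃ l : List G, (∀ x ∈ l, x ∈ S) ∧ l.length = n ∧ l.prod = g}.Nonempty :=
    ⟨l.length, l, hlS, rfl, hprod⟩
  exact Nat.sInf_mem hne

private lemma wlen_one : wlen S (1 : G) = 0 :=
  Nat.le_zero.mp (by simpa using wlen_le_of_list (S := S) [] (by simp))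

private lemma wlen_mul_le_s18 (hgen : Subgroup.closure S = ⊤) (hinv : ∀ s ∈ S, s⁻¹ ∈ S) (a b : G) :
    wlen S (a * b) ≤ wlen S a + wlen S b := by
  obtain ⟨la, hla, hlena, hproda⟩ := wlen_spec hgen hinv a
  obtain ⟨lb, hlb, hlenb, hprodb⟩ := wlen_spec hgen hinv b
  have h := wlen_le_of_list (S := S) (la ++ lb) (by
    intro x hx
    rcases List.mem_append.mp hx with h | h
    exacts [hla x h, hlb x h])
  simpa [hproda, hprodb, hlena, hlenb] using h

private lemma wlen_inv_s18 (hgen : Subgroup.closure S = ⊤) (hinv : ∀ s ∈ S, s⁻¹ ∈ S) (a : G) :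
    wlen S a⁻¹ = wlen S a := by
  have key : ∀ b : G, wlen S b⁻¹ ≤ wlen S b := by
    intro b
    obtain ⟨l, hl, hlen, hprod⟩ := wlen_spec hgen hinv b
    have h2 : ∀ x ∈ (l.map fun x => x⁻¹).reverse, x ∈ S := by
      intro x hx
      simp only [List.mem_reverse, List.mem_map] at hx
      obtain ⟨y, hy, rfl⟩ := hx
      exact hinv y (hl y hy)
    have h := wlen_le_of_list (S := S) _ h2
    rw [← List.prod_inv_reverse, hprod] at h
    simpa [hlen] using h
  exact le_antisymm (key a) (by simpa using key a⁻¹)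

private lemma ball_finite (hfin : S.Finite) (hgen : Subgroup.closure S = ⊤)
    (hinv : ∀ s ∈ S, s⁻¹ ∈ S) (k : ℕ) : {x : G | wlen S x ≤ k}.Finite := by
  induction k with
  | zero =>
    apply Set.Finite.subset (Set.finite_singleton (1 : G))
    intro x hx
    simp only [Set.mem_setOf_eq, Nat.le_zero] at hx
    obtain ⟨l, hl, hlen, hprod⟩ := wlen_spec hgen hinv x
    rw [hx, List.length_eq_zero_iff] at hlen
    subst hlen
    simpa using hprod.symm
  | succ k ih =>
    apply Set.Finite.subset
      (ih.union (Set.Finite.biUnion hfin fun s _ => ih.image fun y => s * y))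
    intro x hx
    simp only [Set.mem_setOf_eq] at hx
    obtain ⟨l, hl, hlen, hprod⟩ := wlen_spec hgen hinv x
    cases l with
    | nil =>
      left
      simp only [List.length_nil] at hlen
      simp only [Set.mem_setOf_eq]
      omega
    | cons a t =>
      right
      refine Set.mem_biUnion (hl a (by simp)) ⟨t.prod, ?_, ?_⟩
      · have h1 := wlen_le_of_list (S := S) t (fun x hx => hl x (by simp [hx]))
        simp only [List.length_cons] at hlen
        simp only [Set.mem_setOf_eq]
        omega
      · rw [← hprod, List.prod_cons]

private lemma one_le_ball_ncard (hfin : S.Finite) (hgen : Subgroup.closure S = ⊤)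
    (hinv : ∀ s ∈ S, s⁻¹ ∈ S) (k : ℕ) :
    1 ≤ ({x : G | wlen S x ≤ k} : Set G).ncard := by
  have h1 : (1 : G) ∈ {x : G | wlen S x ≤ k} := by
    simp [Set.mem_setOf_eq, wlen_one]
  exact (Set.ncard_pos (ball_finite hfin hgen hinv k)).mpr ⟨1, h1⟩

private lemma prefix_split (hgen : Subgroup.closure S = ⊤) (hinv : ∀ s ∈ S, s⁻¹ ∈ S)
    (s : G) (L : ℕ) (hL : L ≤ wlen S s) :
    ∃ u v : G, u * v = s ∧ wlen S u = L ∧ wlen S v = wlen S s - L := by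
  obtain ⟨l, hl, hlen, hprod⟩ := wlen_spec hgen hinv s
  refine ⟨(l.take L).prod, (l.drop L).prod, ?_, ?_, ?_⟩
  · rw [← List.prod_append, List.take_append_drop, hprod]
  all_goals {
    have hu := wlen_le_of_list (S := S) (l.take L) (fun x hx => hl x (List.take_subset _ _ hx))
    have hv := wlen_le_of_list (S := S) (l.drop L) (fun x hx => hl x (List.drop_subset _ _ hx))
    have hm : wlen S ((l.take L).prod * (l.drop L).prod) ≤
        wlen S (l.take L).prod + wlen S (l.drop L).prod := wlen_mul_le_s18 hgen hinv _ _
    rw [List.prod_append.symm, List.take_append_drop, hprod] at hm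
    rw [List.length_take] at hu
    rw [List.length_drop] at hv
    omega
  }

private lemma growth_pow {C₂ : ℝ} (hC₂ : 1 < C₂)
    (hgrowth : ∀ k : ℕ, 1 ≤ k →
      C₂ * (({x : G | wlen S x ≤ k - 1} : Set G).ncard : ℝ) ≤
        (({x : G | wlen S x ≤ k} : Set G).ncard : ℝ))
    (k L : ℕ) : L ≤ k →
    C₂ ^ L * (({x : G | wlen S x ≤ k - L} : Set G).ncard : ℝ) ≤
      (({x : G | wlen S x ≤ k} : Set G).ncard : ℝ) := by
  have hC₂0 : (0 : ℝ) < C₂ := lt_trans zero_lt_one hC₂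
  induction L with
  | zero => intro _; simp
  | succ L ih =>
    intro hL
    have hkL : k - (L + 1) = (k - L) - 1 := by omega
    have hg := hgrowth (k - L) (by omega)
    rw [← hkL] at hg
    calc C₂ ^ (L + 1) * (({x : G | wlen S x ≤ k - (L + 1)} : Set G).ncard : ℝ)
        = C₂ ^ L * (C₂ * (({x : G | wlen S x ≤ k - (L + 1)} : Set G).ncard : ℝ)) := by
          rw [pow_succ]; ring
      _ ≤ C₂ ^ L * (({x : G | wlen S x ≤ k - L} : Set G).ncard : ℝ) := by
          apply mul_le_mul_of_nonneg_left hg (by positivity)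
      _ ≤ _ := ih (by omega)

end BallBoundProof

open Pointwise

/-- Ball bounding lemma: given the growth constant `C₂ > 1`, there is `C₃ > 0` such
that for all `g`, `k ≥ 1` and integers `L` with `2⌈δ⌉ ≤ L ≤ k`, the set
`A_k(g,L) = {s ∈ B_k : (g,s)₁ ≥ L}` satisfies `#A_k(g,L) ≤ C₃ · C₂^{−L} · #B_k`. -/
theorem ball_bounding_lemma {G : Type*} [Group G] (S : Set G)
    (hfin : S.Finite) (hgen : Subgroup.closure S = ⊤)
    (hinv : ∀ s ∈ S, s⁻¹ ∈ S) (hone : (1 : G) ∉ S)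
    (δ : ℝ) (hδ : 0 ≤ δ) (hhyp : IsDeltaHyperbolic S δ)
    (C₂ : ℝ) (hC₂ : 1 < C₂)
    (hgrowth : ∀ k : ℕ, 1 ≤ k →
      C₂ * (({x : G | wlen S x ≤ k - 1} : Set G).ncard : ℝ) ≤
        (({x : G | wlen S x ≤ k} : Set G).ncard : ℝ)) :
    ∃ C₃ : ℝ, 0 < C₃ ∧ ∀ g : G, ∀ k : ℕ, 1 ≤ k → ∀ L : ℕ,
      2 * ⌈δ⌉ ≤ (L : ℤ) → L ≤ k →
      (({s : G | wlen S s ≤ k ∧ (L : ℝ) ≤ gp S g s 1} : Set G).ncard : ℝ) ≤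
        C₃ * (C₂ ^ L)⁻¹ * (({x : G | wlen S x ≤ k} : Set G).ncard : ℝ) := by
  classical
  have hC₂0 : (0 : ℝ) < C₂ := lt_trans zero_lt_one hC₂
  have gp_one : ∀ x y : G,
      gp S x y 1 = ((wlen S x : ℝ) + (wlen S y : ℝ) - (wlen S (y⁻¹ * x) : ℝ)) / 2 := by
    intro x y
    simp only [gp, wdist, inv_one, one_mul, mul_one, wlen_inv_s18 hgen hinv]
  have hflip : ∀ x y : G, gp S x y 1 = gp S y x 1 := by
    intro x y
    rw [gp_one, gp_one]
    have h : wlen S (y⁻¹ * x) = wlen S (x⁻¹ * y) := by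
      rw [← wlen_inv_s18 hgen hinv (y⁻¹ * x), mul_inv_rev, inv_inv]
    rw [h]; ring
  set N : ℕ := ⌊4 * δ⌋₊ with hN
  refine ⟨(({x : G | wlen S x ≤ N} : Set G).ncard : ℝ), ?_, ?_⟩
  · exact_mod_cast Nat.lt_of_lt_of_le Nat.zero_lt_one (one_le_ball_ncard hfin hgen hinv N)
  intro g k hk L _ hLk
  have hsplit : ∀ s ∈ {s : G | wlen S s ≤ k ∧ (L : ℝ) ≤ gp S g s 1},
      ∃ u v : G, u * v = s ∧ wlen S u = L ∧ wlen S v ≤ k - L ∧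
        (L : ℝ) - δ ≤ gp S g u 1 := by
    rintro s ⟨hs1, hs2⟩
    have tri : (wlen S g : ℝ) ≤ (wlen S s : ℝ) + (wlen S (s⁻¹ * g) : ℝ) := by
      have h := wlen_mul_le_s18 hgen hinv s (s⁻¹ * g)
      rw [mul_inv_cancel_left] at h
      exact_mod_cast h
    have hgp_le : gp S g s 1 ≤ (wlen S s : ℝ) := by
      rw [gp_one]; linarith
    have hLs : L ≤ wlen S s := by exact_mod_cast hs2.trans hgp_le
    obtain ⟨u, v, huv, hu, hv⟩ := prefix_split hgen hinv s L hLs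
    have hsv : s⁻¹ * u = v⁻¹ := by rw [← huv]; group
    have hvcast : (wlen S v : ℝ) = (wlen S s : ℝ) - L := by
      rw [hv, Nat.cast_sub hLs]
    have hgpus : gp S u s 1 = (L : ℝ) := by
      rw [gp_one, hsv, wlen_inv_s18 hgen hinv, hu, hvcast]; ring
    have hhyp1 := hhyp g u s 1
    have hmin : (L : ℝ) ≤ min (gp S g s 1) (gp S u s 1) := le_min hs2 hgpus.ge
    exact ⟨u, v, huv, hu, by omega, by linarith⟩
  rcases Set.eq_empty_or_nonempty
      {s : G | wlen S s ≤ k ∧ (L : ℝ) ≤ gp S g s 1} with hA | ⟨s₀, hs₀⟩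
  · rw [hA]
    simp only [Set.ncard_empty, Nat.cast_zero]
    apply mul_nonneg (mul_nonneg (Nat.cast_nonneg _) _) (Nat.cast_nonneg _)
    exact inv_nonneg.mpr (pow_nonneg hC₂0.le L)
  obtain ⟨u₀, v₀, hu₀v₀, hu₀, hv₀, hgp₀⟩ := hsplit s₀ hs₀
  have hsub : {s : G | wlen S s ≤ k ∧ (L : ℝ) ≤ gp S g s 1} ⊆
      (u₀ • {x : G | wlen S x ≤ N}) * {x : G | wlen S x ≤ k - L} := by
    intro s hs
    obtain ⟨u, v, huv, hu, hv, hgpu⟩ := hsplit s hs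
    have hh := hhyp u u₀ g 1
    rw [hflip u g, hflip u₀ g] at hh
    have hgpuu₀ : (L : ℝ) - 2 * δ ≤ gp S u u₀ 1 := by
      have hm := le_min hgpu hgp₀
      linarith
    have hd : (wlen S (u₀⁻¹ * u) : ℝ) ≤ 4 * δ := by
      have hg1 := gp_one u u₀
      rw [hu, hu₀] at hg1
      linarith
    have hdN : wlen S (u₀⁻¹ * u) ≤ N := Nat.le_floor hd
    have humem : u ∈ u₀ • {x : G | wlen S x ≤ N} :=
      ⟨u₀⁻¹ * u, hdN, by show u₀ • (u₀⁻¹ * u) = u; rw [smul_eq_mul]; group⟩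
    have hmem := Set.mul_mem_mul humem (show v ∈ {x : G | wlen S x ≤ k - L} from hv)
    rwa [huv] at hmem
  have hfinN : ({x : G | wlen S x ≤ N} : Set G).Finite := ball_finite hfin hgen hinv N
  have hfinkL : ({x : G | wlen S x ≤ k - L} : Set G).Finite :=
    ball_finite hfin hgen hinv (k - L)
  have hfinprod : ((u₀ • {x : G | wlen S x ≤ N}) * {x : G | wlen S x ≤ k - L}).Finite :=
    Set.Finite.mul hfinN.smul_set hfinkL
  have h1 := Set.ncard_le_ncard hsub hfinprod
  have h2 : ((u₀ • {x : G | wlen S x ≤ N}) * {x : G | wlen S x ≤ k - L}).ncard ≤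
      ({x : G | wlen S x ≤ N} : Set G).ncard * ({x : G | wlen S x ≤ k - L} : Set G).ncard := by
    have h := Set.natCard_mul_le (s := u₀ • {x : G | wlen S x ≤ N})
      (t := {x : G | wlen S x ≤ k - L})
    rw [Nat.card_coe_set_eq, Nat.card_coe_set_eq, Nat.card_coe_set_eq,
      Set.ncard_smul_set] at h
    exact h
  have h3 := growth_pow hC₂ hgrowth k L hLk
  have hpow : (0 : ℝ) < C₂ ^ L := pow_pos hC₂0 L
  calc (({s : G | wlen S s ≤ k ∧ (L : ℝ) ≤ gp S g s 1} : Set G).ncard : ℝ)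
      ≤ (({x : G | wlen S x ≤ N} : Set G).ncard : ℝ) *
        (({x : G | wlen S x ≤ k - L} : Set G).ncard : ℝ) := by exact_mod_cast h1.trans h2
    _ = (({x : G | wlen S x ≤ N} : Set G).ncard : ℝ) *
        ((C₂ ^ L)⁻¹ * (C₂ ^ L * (({x : G | wlen S x ≤ k - L} : Set G).ncard : ℝ))) := by
        field_simp
    _ ≤ (({x : G | wlen S x ≤ N} : Set G).ncard : ℝ) *
        ((C₂ ^ L)⁻¹ * (({x : G | wlen S x ≤ k} : Set G).ncard : ℝ)) := by
        apply mul_le_mul_of_nonneg_left _ (Nat.cast_nonneg _)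
        exact mul_le_mul_of_nonneg_left h3 (inv_nonneg.mpr hpow.le)
    _ = (({x : G | wlen S x ≤ N} : Set G).ncard : ℝ) * (C₂ ^ L)⁻¹ *
        (({x : G | wlen S x ≤ k} : Set G).ncard : ℝ) := by ring
end
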